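/- For the implicit upwind scheme with mobility M(x,y) = β[1+x]⁺[1−y]⁺ and velocities u_{i+1/2,j} = −(w_{i+1,j} − w_{i,j})/h, u_{i,j+1/2} = −(w_{i,j+1} − w_{i,j})/h, the discrete chemical-potential pairing is nonpositive: ⟨ρ^{k+1} − ρ^k, w⟩_h ≤ 0, where ρ^{k+1} − ρ^k is given by the conservative flux update. -/

import Mathlib

open Finset

/-!
Summation by parts on the periodic grid moves the discrete divergence onto `w`, turning the
pairing into `-Δt h² ∑ (Fx·ux + Fy·uy)`. Each upwind flux is a nonnegative mobility times the
positive or negative part of its own velocity, so every product `F·u` is nonnegative.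
-/

/-- Discrete periodic convolution `[J⋆φ]_{i,j} = h² ∑_{n,m} J_{n,m} φ_{i−n,j−m}`. -/
noncomputable def conv {N : ℕ} [NeZero N] (h : ℝ) (J φ : ZMod N × ZMod N → ℝ) :
    ZMod N × ZMod N → ℝ :=
  fun p => h ^ 2 * ∑ q : ZMod N × ZMod N, J q * φ (p.1 - q.1, p.2 - q.2)

/-- Discrete inner product `⟨φ,ψ⟩_h = h² ∑_{i,j} φ_{i,j} ψ_{i,j}`. -/
noncomputable def ip {N : ℕ} [NeZero N] (h : ℝ) (φ ψ : ZMod N × ZMod N → ℝ) : ℝ :=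
  h ^ 2 * ∑ p : ZMod N × ZMod N, φ p * ψ p

/-- Degenerate upwind mobility `M(x,y) = β [1+x]⁺ [1−y]⁺`. -/
noncomputable def Mob (β x y : ℝ) : ℝ := β * max (1 + x) 0 * max (1 - y) 0

theorem Mob_nonneg {β : ℝ} (hβ : 0 ≤ β) (x y : ℝ) : 0 ≤ Mob β x y := by
  unfold Mob; positivity

theorem upwind_flux_mul_self_nonneg {a b : ℝ} (ha : 0 ≤ a) (hb : 0 ≤ b) (u : ℝ) :
    0 ≤ (a * max u 0 + b * min u 0) * u := by
  rcases le_total 0 u with hu | hu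
  · rw [max_eq_left hu, min_eq_right hu]
    nlinarith [mul_nonneg ha (mul_self_nonneg u)]
  · rw [max_eq_right hu, min_eq_left hu]
    nlinarith [mul_nonneg hb (mul_self_nonneg u)]

theorem Fintype.sum_sub_shift_mul {G R : Type*} [AddGroup G] [Fintype G] [CommRing R]
    (F w : G → R) (e : G) :
    ∑ p, (F p - F (p - e)) * w p = ∑ p, F p * (w p - w (p + e)) := by
  have hshift : ∑ p, F (p - e) * w p = ∑ p, F p * w (p + e) :=
    Fintype.sum_equiv (Equiv.subRight e) _ _ fun p => by simp
  simp only [sub_mul, mul_sub, Finset.sum_sub_distrib, hshift]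

theorem chemical_potential_pairing_nonpos_general {N : ℕ} [NeZero N] (Δt h β : ℝ)
    (hΔt : 0 < Δt) (hβ : 0 < β)
    (ρ0 ρ1 w ux uy Fx Fy : ZMod N × ZMod N → ℝ)
    (hux : ∀ p : ZMod N × ZMod N, ux p = -(w (p.1 + 1, p.2) - w p) / h)
    (huy : ∀ p : ZMod N × ZMod N, uy p = -(w (p.1, p.2 + 1) - w p) / h)
    (hFx : ∀ p : ZMod N × ZMod N,
      Fx p = Mob β (ρ1 p) (ρ1 (p.1 + 1, p.2)) * max (ux p) 0
        + Mob β (ρ1 (p.1 + 1, p.2)) (ρ1 p) * min (ux p) 0)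
    (hFy : ∀ p : ZMod N × ZMod N,
      Fy p = Mob β (ρ1 p) (ρ1 (p.1, p.2 + 1)) * max (uy p) 0
        + Mob β (ρ1 (p.1, p.2 + 1)) (ρ1 p) * min (uy p) 0)
    (hupdate : ∀ p : ZMod N × ZMod N,
      ρ1 p - ρ0 p = -(Δt / h) *
        (Fx p - Fx (p.1 - 1, p.2) + Fy p - Fy (p.1, p.2 - 1))) :
    ip h (fun p => ρ1 p - ρ0 p) w ≤ 0 := by
  have hdiv : ∀ p : ZMod N × ZMod N, (ρ1 p - ρ0 p) * w p = -(Δt / h) *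
      ((Fx p - Fx (p - (1, 0))) * w p + (Fy p - Fy (p - (0, 1))) * w p) := fun ⟨i, j⟩ => by
    rw [hupdate, Prod.mk_sub_mk, Prod.mk_sub_mk, sub_zero, sub_zero]; ring
  have hvel : ∀ p : ZMod N × ZMod N, (Δt / h) * (Fx p * (w p - w (p + (1, 0)))
      + Fy p * (w p - w (p + (0, 1)))) = Δt * (Fx p * ux p + Fy p * uy p) := fun ⟨i, j⟩ => by
    rw [hux, huy, Prod.mk_add_mk, Prod.mk_add_mk, add_zero, add_zero]; ring
  have hpair : ip h (fun p => ρ1 p - ρ0 p) w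
      = -(Δt * h ^ 2) * ∑ p, (Fx p * ux p + Fy p * uy p) := by
    rw [ip, Finset.sum_congr rfl fun p _ => hdiv p, ← Finset.mul_sum, Finset.sum_add_distrib,
      Fintype.sum_sub_shift_mul, Fintype.sum_sub_shift_mul, ← Finset.sum_add_distrib,
      neg_mul, Finset.mul_sum, Finset.sum_congr rfl fun p _ => hvel p, ← Finset.mul_sum]
    ring
  have hdissip : ∀ p, 0 ≤ Fx p * ux p + Fy p * uy p := fun p => by
    rw [hFx p, hFy p]
    exact add_nonneg
      (upwind_flux_mul_self_nonneg (Mob_nonneg hβ.le _ _) (Mob_nonneg hβ.le _ _) _)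
      (upwind_flux_mul_self_nonneg (Mob_nonneg hβ.le _ _) (Mob_nonneg hβ.le _ _) _)
  rw [hpair]
  exact mul_nonpos_of_nonpos_of_nonneg (neg_nonpos.mpr (by positivity))
    (Finset.sum_nonneg fun p _ => hdissip p)

theorem chemical_potential_pairing_nonpos {N : ℕ} [NeZero N] (Δt h β : ℝ)
    (hΔt : 0 < Δt) (hh : 0 < h) (hβ : 0 < β)
    (ρ0 ρ1 w ux uy Fx Fy : ZMod N × ZMod N → ℝ)
    (hux : ∀ p : ZMod N × ZMod N, ux p = -(w (p.1 + 1, p.2) - w p) / h)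
    (huy : ∀ p : ZMod N × ZMod N, uy p = -(w (p.1, p.2 + 1) - w p) / h)
    (hFx : ∀ p : ZMod N × ZMod N,
      Fx p = Mob β (ρ1 p) (ρ1 (p.1 + 1, p.2)) * max (ux p) 0
        + Mob β (ρ1 (p.1 + 1, p.2)) (ρ1 p) * min (ux p) 0)
    (hFy : ∀ p : ZMod N × ZMod N,
      Fy p = Mob β (ρ1 p) (ρ1 (p.1, p.2 + 1)) * max (uy p) 0
        + Mob β (ρ1 (p.1, p.2 + 1)) (ρ1 p) * min (uy p) 0)
    (hupdate : ∀ p : ZMod N × ZMod N,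
      ρ1 p - ρ0 p = -(Δt / h) *
        (Fx p - Fx (p.1 - 1, p.2) + Fy p - Fy (p.1, p.2 - 1))) :
    ip h (fun p => ρ1 p - ρ0 p) w ≤ 0 :=
  chemical_potential_pairing_nonpos_general Δt h β hΔt hβ ρ0 ρ1 w ux uy Fx Fy hux huy hFx hFy
    hupdate
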